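/- Let κ > 0, c ∈ (0,1), λ ∈ (0, π²/(4c²κ)), a ∈ [0, 1−c], and set b = a + c. Then f(a, 0, 0, κ, λ) = 0 if and only if tanh(√λ·(1−b)) = ( √κ·tan(√(λκ)·c) − tanh(√λ·a) ) / ( 1 + κ^{−1/2}·tanh(√λ·a)·tan(√(λκ)·c) ). -/

import Mathlib

/-- The determinant function `f` from the Robin characteristic equation. -/
noncomputable def f (c a β0 β1 κ lam : ℝ) : ℝ :=
  (κ + 1) * (lam - β0 * β1) * Real.cosh (Real.sqrt lam * (2 * a + c - 1)) *
      Real.sin (Real.sqrt (lam * κ) * c)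
  + (κ + 1) * (β0 - β1) * Real.sqrt lam * Real.sinh (Real.sqrt lam * (2 * a + c - 1)) *
      Real.sin (Real.sqrt (lam * κ) * c)
  + Real.cosh (Real.sqrt lam * (1 - c)) *
      ((κ - 1) * (lam + β0 * β1) * Real.sin (Real.sqrt (lam * κ) * c)
        - 2 * Real.sqrt (lam * κ) * (β0 + β1) * Real.cos (Real.sqrt (lam * κ) * c))
  + Real.sinh (Real.sqrt lam * (1 - c)) *
      ((κ - 1) * (β0 + β1) * Real.sqrt lam * Real.sin (Real.sqrt (lam * κ) * c)
        - 2 * Real.sqrt κ * (β0 * β1 + lam) * Real.cos (Real.sqrt (lam * κ) * c))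

theorem stmt1 (κ c lam a b : ℝ) (hκ : 0 < κ) (hc : c ∈ Set.Ioo (0:ℝ) 1)
    (hlam : lam ∈ Set.Ioo 0 (Real.pi ^ 2 / (4 * c ^ 2 * κ)))
    (ha : a ∈ Set.Icc 0 (1 - c)) (hb : b = a + c) :
    f c a 0 0 κ lam = 0 ↔
      Real.tanh (Real.sqrt lam * (1 - b)) =
        (Real.sqrt κ * Real.tan (Real.sqrt (lam * κ) * c) - Real.tanh (Real.sqrt lam * a)) /
          (1 + (Real.sqrt κ)⁻¹ * Real.tanh (Real.sqrt lam * a) * Real.tan (Real.sqrt (lam * κ) * c)) := by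
  obtain ⟨hc0, hc1⟩ := hc
  obtain ⟨hl0, hl1⟩ := hlam
  obtain ⟨ha0, ha1⟩ := ha
  set s := Real.sqrt (lam * κ) * c with hs
  set A := Real.sqrt lam * a with hA
  set B := Real.sqrt lam * (1 - b) with hB
  have hsl : 0 < Real.sqrt lam := Real.sqrt_pos.mpr hl0
  have hsk : 0 < Real.sqrt κ := Real.sqrt_pos.mpr hκ
  have hs0 : 0 ≤ s := mul_nonneg (Real.sqrt_nonneg _) hc0.le
  have hsπ : s < Real.pi / 2 := by
    have h2 : lam * κ < Real.pi ^ 2 / (4 * c ^ 2 * κ) * κ :=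
      mul_lt_mul_of_pos_right hl1 hκ
    have h3 : Real.pi ^ 2 / (4 * c ^ 2 * κ) * κ = (Real.pi / (2 * c)) ^ 2 := by
      field_simp; ring
    have h1 : lam * κ < (Real.pi / (2 * c)) ^ 2 := by rw [← h3]; exact h2
    have h4 : 0 < Real.pi / (2 * c) := by positivity
    have h5 : Real.sqrt (lam * κ) < Real.pi / (2 * c) := by
      rw [show Real.pi / (2 * c) = Real.sqrt ((Real.pi / (2 * c)) ^ 2) from
        (Real.sqrt_sq h4.le).symm]
      exact Real.sqrt_lt_sqrt (by positivity) h1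
    calc s = Real.sqrt (lam * κ) * c := rfl
      _ < Real.pi / (2 * c) * c := mul_lt_mul_of_pos_right h5 hc0
      _ = Real.pi / 2 := by field_simp
  have hcos : 0 < Real.cos s := Real.cos_pos_of_mem_Ioo ⟨by linarith [Real.pi_pos], hsπ⟩
  have hsin : 0 ≤ Real.sin s :=
    Real.sin_nonneg_of_nonneg_of_le_pi hs0 (by linarith [Real.pi_pos])
  have htan : 0 ≤ Real.tan s := by rw [Real.tan_eq_sin_div_cos]; positivity
  have hA0 : 0 ≤ A := mul_nonneg hsl.le ha0
  have htanhA : 0 ≤ Real.tanh A := by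
    rw [Real.tanh_eq_sinh_div_cosh]
    exact div_nonneg (Real.sinh_nonneg_iff.mpr hA0) (Real.cosh_pos A).le
  have hD : 0 < 1 + (Real.sqrt κ)⁻¹ * Real.tanh A * Real.tan s := by
    have : 0 ≤ (Real.sqrt κ)⁻¹ * Real.tanh A * Real.tan s := by positivity
    linarith
  have hchA : 0 < Real.cosh A := Real.cosh_pos A
  have hchB : 0 < Real.cosh B := Real.cosh_pos B
  have hab1 : Real.sqrt lam * (2 * a + c - 1) = A - B := by rw [hA, hB, hb]; ring
  have hab2 : Real.sqrt lam * (1 - c) = A + B := by rw [hA, hB, hb]; ring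
  have hκsq : Real.sqrt κ ^ 2 = κ := Real.sq_sqrt hκ.le
  have hE : f c a 0 0 κ lam = lam * 2 *
      (Real.sqrt κ ^ 2 * Real.cosh A * Real.cosh B * Real.sin s
        - Real.sinh A * Real.sinh B * Real.sin s
        - Real.sqrt κ * (Real.sinh A * Real.cosh B + Real.cosh A * Real.sinh B) * Real.cos s) := by
    simp only [f, hab1, hab2, Real.cosh_sub, Real.cosh_add, Real.sinh_add, ← hs, hκsq]
    ring
  rw [hE, eq_div_iff hD.ne', Real.tanh_eq_sinh_div_cosh, Real.tanh_eq_sinh_div_cosh,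
    Real.tan_eq_sin_div_cos]
  rw [mul_eq_zero, mul_eq_zero]
  constructor
  · rintro ((h | h) | h)
    · linarith
    · norm_num at h
    · field_simp
      linear_combination -h
  · intro h
    right
    field_simp at h
    have h2 : Real.cosh A * Real.cos s *
        (Real.sqrt κ ^ 2 * Real.cosh A * Real.cosh B * Real.sin s
          - Real.sinh A * Real.sinh B * Real.sin s
          - Real.sqrt κ * (Real.sinh A * Real.cosh B + Real.cosh A * Real.sinh B) * Real.cos s)
        = Real.cosh A * Real.cos s * 0 := by linear_combination (-(Real.cosh A * Real.cos s)) * h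
    exact mul_left_cancel₀ (by positivity) h2
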